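/- arXiv:1910.03865 — 4 statements merged into one kernel-verified Lean document; each statement's English description precedes it below -/
import Mathlib

section
/- Let M ≥ 1 and L ≥ 1 be integers. Let h = (h_1, …, h_M) and ĥ = (ĥ_1, …, ĥ_M) be random unit vectors in ℝ^M with nonnegative entries, and let s_1, …, s_M and ŝ_1, …, ŝ_M be random unit vectors in ℝ^L, all on a common probability space. Assume the pair (h, ĥ) is independent of the family (s_1, ŝ_1, …, s_M, ŝ_M), and that E[⟨s_i, ŝ_i⟩] has the same value for every i, equal to 1 − D_s/2 where D_s := E[‖s_1 − ŝ_1‖²]. Let f ∈ ℝ^(M·L) be the concatenation of the blocks h_i·s_i and f̂ the concatenation of the blocks ĥ_i·ŝ_i, and set D_h := E[‖h − ĥ‖²]. Then E[‖f − f̂‖²] = D_s + D_h − (1/2)·D_s·D_h. -/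
open MeasureTheory ProbabilityTheory
open scoped RealInnerProductSpace

/-!
For unit vectors `x, y` one has `‖x - y‖² = 2 - 2⟪x, y⟫`. Blockwise, `f` and `f̂` are unit vectors
with `⟪f, f̂⟫ = ∑ᵢ hᵢ ĥᵢ ⟪sᵢ, ŝᵢ⟫`. By independence each term has expectation
`E[hᵢ ĥᵢ] (1 - D_s/2)`, and `∑ᵢ E[hᵢ ĥᵢ] = E⟪h, ĥ⟫ = 1 - D_h/2`, so
`E‖f - f̂‖² = 2 - 2 (1 - D_s/2)(1 - D_h/2)`.
-/

section Blocks

variable {ι κ : Type*} [Fintype ι] [Fintype κ]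

theorem inner_eq_sum_of_blocks {a b : EuclideanSpace ℝ ι} {u v : ι → EuclideanSpace ℝ κ}
    {x y : EuclideanSpace ℝ (ι × κ)} (hx : ∀ p, x p = a p.1 * u p.1 p.2)
    (hy : ∀ p, y p = b p.1 * v p.1 p.2) :
    ⟪x, y⟫ = ∑ i, a i * b i * ⟪u i, v i⟫ := by
  simp only [PiLp.inner_apply, Fintype.sum_prod_type, hx, hy, Finset.mul_sum]
  refine Finset.sum_congr rfl fun i _ => Finset.sum_congr rfl fun j _ => ?_
  simp only [RCLike.inner_apply, conj_trivial]
  ring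

theorem norm_eq_one_of_blocks {a : EuclideanSpace ℝ ι} {u : ι → EuclideanSpace ℝ κ}
    {x : EuclideanSpace ℝ (ι × κ)} (ha : ‖a‖ = 1) (hu : ∀ i, ‖u i‖ = 1)
    (hx : ∀ p, x p = a p.1 * u p.1 p.2) : ‖x‖ = 1 := by
  have hx2 : ‖x‖ ^ 2 = ‖a‖ ^ 2 := by
    rw [← real_inner_self_eq_norm_sq, ← real_inner_self_eq_norm_sq, inner_eq_sum_of_blocks hx hx]
    have hu' : ∀ i, ⟪u i, u i⟫ = 1 := fun i => by rw [real_inner_self_eq_norm_sq, hu, one_pow]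
    simp only [hu', mul_one, PiLp.inner_apply, RCLike.inner_apply, conj_trivial]
  rw [ha, one_pow] at hx2
  exact (pow_eq_one_iff_of_nonneg (norm_nonneg x) two_ne_zero).1 hx2

end Blocks

theorem norm_sub_sq_eq_two_sub_inner {E : Type*} [NormedAddCommGroup E] [InnerProductSpace ℝ E]
    {x y : E} (hx : ‖x‖ = 1) (hy : ‖y‖ = 1) : ‖x - y‖ ^ 2 = 2 - 2 * ⟪x, y⟫ := by
  rw [norm_sub_sq_real, hx, hy]; ring

theorem integral_norm_sub_sq_eq_two_sub_integral_inner {E Ω : Type*} [NormedAddCommGroup E]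
    [InnerProductSpace ℝ E] [MeasurableSpace Ω] {μ : Measure Ω} [IsProbabilityMeasure μ]
    {X Y : Ω → E} (hX : ∀ ω, ‖X ω‖ = 1) (hY : ∀ ω, ‖Y ω‖ = 1)
    (hXY : Integrable (fun ω => ⟪X ω, Y ω⟫) μ) :
    ∫ ω, ‖X ω - Y ω‖ ^ 2 ∂μ = 2 - 2 * ∫ ω, ⟪X ω, Y ω⟫ ∂μ := by
  simp only [norm_sub_sq_eq_two_sub_inner (hX _) (hY _)]
  rw [integral_sub (integrable_const 2) (hXY.const_mul 2), integral_const_mul]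
  simp

theorem abs_apply_mul_apply_le_one {ι : Type*} [Fintype ι] {a b : EuclideanSpace ℝ ι}
    (ha : ‖a‖ = 1) (hb : ‖b‖ = 1) (i : ι) : |a i * b i| ≤ 1 := by
  rw [abs_mul]
  exact mul_le_one₀ (ha ▸ PiLp.norm_apply_le a i) (abs_nonneg _) (hb ▸ PiLp.norm_apply_le b i)

theorem abs_real_inner_le_one {E : Type*} [NormedAddCommGroup E] [InnerProductSpace ℝ E]
    {x y : E} (hx : ‖x‖ = 1) (hy : ‖y‖ = 1) : |⟪x, y⟫| ≤ 1 := by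
  simpa [hx, hy] using abs_real_inner_le_norm x y

section Expectation

variable {Ω ι κ : Type*} [MeasurableSpace Ω] {μ : Measure Ω} [IsProbabilityMeasure μ]
  [Fintype ι] [Fintype κ] {a b : Ω → EuclideanSpace ℝ ι} {u v : ι → Ω → EuclideanSpace ℝ κ}

theorem integrable_apply_mul_apply (ha_meas : Measurable a) (hb_meas : Measurable b)
    (ha : ∀ ω, ‖a ω‖ = 1) (hb : ∀ ω, ‖b ω‖ = 1) (i : ι) :
    Integrable (fun ω => a ω i * b ω i) μ :=
  .of_bound (by fun_prop) 1 (.of_forall fun ω => abs_apply_mul_apply_le_one (ha ω) (hb ω) i)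

theorem integrable_apply_mul_apply_mul_inner (ha_meas : Measurable a) (hb_meas : Measurable b)
    (hu_meas : ∀ i, Measurable (u i)) (hv_meas : ∀ i, Measurable (v i))
    (ha : ∀ ω, ‖a ω‖ = 1) (hb : ∀ ω, ‖b ω‖ = 1) (hu : ∀ i ω, ‖u i ω‖ = 1)
    (hv : ∀ i ω, ‖v i ω‖ = 1) (i : ι) :
    Integrable (fun ω => a ω i * b ω i * ⟪u i ω, v i ω⟫) μ :=
  .of_bound (by fun_prop) 1 (.of_forall fun ω => by
    rw [Real.norm_eq_abs, abs_mul]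
    exact mul_le_one₀ (abs_apply_mul_apply_le_one (ha ω) (hb ω) i) (abs_nonneg _)
      (abs_real_inner_le_one (hu i ω) (hv i ω)))

theorem integral_sum_apply_mul_apply_mul_inner_of_indepFun (ha_meas : Measurable a)
    (hb_meas : Measurable b) (hu_meas : ∀ i, Measurable (u i)) (hv_meas : ∀ i, Measurable (v i))
    (ha : ∀ ω, ‖a ω‖ = 1) (hb : ∀ ω, ‖b ω‖ = 1) (hu : ∀ i ω, ‖u i ω‖ = 1)
    (hv : ∀ i ω, ‖v i ω‖ = 1)
    (hind : IndepFun (fun ω => (a ω, b ω)) (fun ω i => (u i ω, v i ω)) μ) {c : ℝ}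
    (hc : ∀ i, ∫ ω, ⟪u i ω, v i ω⟫ ∂μ = c) :
    ∫ ω, ∑ i, a ω i * b ω i * ⟪u i ω, v i ω⟫ ∂μ = c * ∫ ω, ⟪a ω, b ω⟫ ∂μ := by
  have hfactor : ∀ i, ∫ ω, a ω i * b ω i * ⟪u i ω, v i ω⟫ ∂μ = c * ∫ ω, a ω i * b ω i ∂μ := by
    intro i
    have hindep : IndepFun (fun ω => a ω i * b ω i) (fun ω => ⟪u i ω, v i ω⟫) μ :=
      hind.comp (φ := fun p : EuclideanSpace ℝ ι × EuclideanSpace ℝ ι => p.1 i * p.2 i)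
        (ψ := fun w : ι → EuclideanSpace ℝ κ × EuclideanSpace ℝ κ => ⟪(w i).1, (w i).2⟫)
        (by fun_prop) (by fun_prop)
    rw [hindep.integral_fun_mul_eq_mul_integral (by fun_prop) (by fun_prop), hc i, mul_comm]
  have hinner : ∀ ω, ⟪a ω, b ω⟫ = ∑ i, a ω i * b ω i := fun ω => by
    simp [PiLp.inner_apply, mul_comm]
  simp only [hinner]
  rw [integral_finsetSum _ fun i _ => integrable_apply_mul_apply_mul_inner ha_meas hb_meas
      hu_meas hv_meas ha hb hu hv i,
    integral_finsetSum _ fun i _ => integrable_apply_mul_apply ha_meas hb_meas ha hb i,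
    Finset.mul_sum]
  exact Finset.sum_congr rfl fun i _ => hfactor i

end Expectation

theorem hierarchical_quantizer_distortion_general
    {Ω : Type*} [MeasureSpace Ω] [IsProbabilityMeasure (ℙ : Measure Ω)]
    (M L : ℕ)
    (h hq : Ω → EuclideanSpace ℝ (Fin M))
    (s sq : Fin M → Ω → EuclideanSpace ℝ (Fin L))
    (hhm : Measurable h) (hhqm : Measurable hq)
    (hsm : ∀ i, Measurable (s i)) (hsqm : ∀ i, Measurable (sq i))
    (hhu : ∀ ω, ‖h ω‖ = 1) (hhqu : ∀ ω, ‖hq ω‖ = 1)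
    (hsu : ∀ i ω, ‖s i ω‖ = 1) (hsqu : ∀ i ω, ‖sq i ω‖ = 1)
    (hind : IndepFun (fun ω => (h ω, hq ω)) (fun ω (i : Fin M) => (s i ω, sq i ω)) ℙ)
    (Ds Dh : ℝ)
    (hDsAll : ∀ i : Fin M, ∫ ω, ⟪s i ω, sq i ω⟫ = 1 - Ds / 2)
    (hDh : Dh = ∫ ω, ‖h ω - hq ω‖ ^ 2)
    (f fq : Ω → EuclideanSpace ℝ (Fin M × Fin L))
    (hf : ∀ ω p, f ω p = h ω p.1 * s p.1 ω p.2)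
    (hfq : ∀ ω p, fq ω p = hq ω p.1 * sq p.1 ω p.2) :
    ∫ ω, ‖f ω - fq ω‖ ^ 2 = Ds + Dh - (1 / 2) * Ds * Dh := by
  have hf_inner : ∀ ω, ⟪f ω, fq ω⟫ = ∑ i, h ω i * hq ω i * ⟪s i ω, sq i ω⟫ := fun ω =>
    inner_eq_sum_of_blocks (hf ω) (hfq ω)
  have hh_inner_int : Integrable (fun ω => ⟪h ω, hq ω⟫) :=
    .of_bound (by fun_prop) 1 (.of_forall fun ω => abs_real_inner_le_one (hhu ω) (hhqu ω))
  have hf_inner_int : Integrable (fun ω => ⟪f ω, fq ω⟫) := by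
    simpa only [hf_inner] using integrable_finsetSum _ fun i _ =>
      integrable_apply_mul_apply_mul_inner hhm hhqm hsm hsqm hhu hhqu hsu hsqu i
  have hE_h : ∫ ω, ⟪h ω, hq ω⟫ = 1 - Dh / 2 := by
    rw [hDh, integral_norm_sub_sq_eq_two_sub_integral_inner hhu hhqu hh_inner_int]
    ring
  have hE_f : ∫ ω, ⟪f ω, fq ω⟫ = (1 - Ds / 2) * (1 - Dh / 2) := by
    simp only [hf_inner]
    rw [integral_sum_apply_mul_apply_mul_inner_of_indepFun hhm hhqm hsm hsqm hhu hhqu hsu hsqu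
      hind hDsAll, hE_h]
  rw [integral_norm_sub_sq_eq_two_sub_integral_inner
    (fun ω => norm_eq_one_of_blocks (hhu ω) (fun i => hsu i ω) (hf ω))
    (fun ω => norm_eq_one_of_blocks (hhqu ω) (fun i => hsqu i ω) (hfq ω)) hf_inner_int, hE_f]
  ring

/-- Distortion decomposition for the hierarchical (block + hinge) quantizer: if the pair of
hinge vectors `(h, ĥ)` (unit vectors in `ℝ^M` with nonnegative entries) is independent of
the family of normalized blocks `(s_i, ŝ_i)` (unit vectors in `ℝ^L`), `E[⟨s_i, ŝ_i⟩]` has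
the same value `1 − D_s/2` for every `i` where `D_s = E[‖s_1 − ŝ_1‖²]`, and `f`, `f̂` are the
concatenations of the blocks `h_i·s_i` and `ĥ_i·ŝ_i` respectively, then
`E[‖f − f̂‖²] = D_s + D_h − (1/2)·D_s·D_h` where `D_h = E[‖h − ĥ‖²]`. -/
theorem hierarchical_quantizer_distortion
    {Ω : Type*} [MeasureSpace Ω] [IsProbabilityMeasure (ℙ : Measure Ω)]
    (M L : ℕ) (hM : 1 ≤ M) (hL : 1 ≤ L)
    (h hq : Ω → EuclideanSpace ℝ (Fin M))
    (s sq : Fin M → Ω → EuclideanSpace ℝ (Fin L))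
    (hhm : Measurable h) (hhqm : Measurable hq)
    (hsm : ∀ i, Measurable (s i)) (hsqm : ∀ i, Measurable (sq i))
    (hhu : ∀ ω, ‖h ω‖ = 1) (hhqu : ∀ ω, ‖hq ω‖ = 1)
    (hhn : ∀ ω i, 0 ≤ h ω i) (hhqn : ∀ ω i, 0 ≤ hq ω i)
    (hsu : ∀ i ω, ‖s i ω‖ = 1) (hsqu : ∀ i ω, ‖sq i ω‖ = 1)
    (hind : IndepFun (fun ω => (h ω, hq ω)) (fun ω (i : Fin M) => (s i ω, sq i ω)) ℙ)
    (Ds Dh : ℝ)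
    (hDs : Ds = ∫ ω, ‖s ⟨0, hM⟩ ω - sq ⟨0, hM⟩ ω‖ ^ 2)
    (hDsAll : ∀ i : Fin M, ∫ ω, ⟪s i ω, sq i ω⟫ = 1 - Ds / 2)
    (hDh : Dh = ∫ ω, ‖h ω - hq ω‖ ^ 2)
    (f fq : Ω → EuclideanSpace ℝ (Fin M × Fin L))
    (hf : ∀ ω p, f ω p = h ω p.1 * s p.1 ω p.2)
    (hfq : ∀ ω p, fq ω p = hq ω p.1 * sq p.1 ω p.2) :
    ∫ ω, ‖f ω - fq ω‖ ^ 2 = Ds + Dh - (1 / 2) * Ds * Dh :=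
  hierarchical_quantizer_distortion_general M L h hq s sq hhm hhqm hsm hsqm hhu hhqu hsu hsqu hind
    Ds Dh hDsAll hDh f fq hf hfq
end

section
/- Let (X, d) be a metric space, C ⊆ X, h ∈ X, and let r > 0 and α > 0. Suppose C' := C ∩ {y : d(y, h) ≤ (1+α)·r} is nonempty. Then for every x ∈ X with d(x, h) ≤ r, one has inf_{c ∈ C'} d(c, x) ≤ (1 + 2/α) · inf_{c ∈ C} d(c, x). -/
/-!
If some point of `C` is closer to `x` than `α r`, it already lies in the ball of radius
`(1 + α) r` about `h`, so cutting `C` down to that ball does not change the distance from `x`.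
Otherwise `d(x, C) ≥ α r`, while any point of `C'` is within `r + (1 + α) r = (1 + 2/α) · α r`
of `x`.
-/

open Metric

namespace Metric

variable {X : Type*} [PseudoMetricSpace X] {s : Set X} {x h : X} {ρ : ℝ}

theorem infDist_inter_closedBall_eq_of_infDist_add_dist_lt (hlt : infDist x s + dist x h < ρ) :
    infDist x (s ∩ closedBall h ρ) = infDist x s := by
  rcases s.eq_empty_or_nonempty with rfl | hs
  · simp
  obtain ⟨y, hys, hxy⟩ := (infDist_lt_iff hs).1 (show infDist x s < ρ - dist x h by linarith)
  have hball : closedBall x (dist y x) ⊆ closedBall h ρ := by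
    refine closedBall_subset_closedBall' ?_
    rw [dist_comm y x]
    linarith
  have hy : y ∈ s ∩ closedBall x (dist y x) := ⟨hys, mem_closedBall.2 le_rfl⟩
  refine le_antisymm ?_ (infDist_le_infDist_of_subset Set.inter_subset_left ⟨y, hys, ?_⟩)
  · calc infDist x (s ∩ closedBall h ρ)
        ≤ infDist x (s ∩ closedBall x (dist y x)) :=
          infDist_le_infDist_of_subset (Set.inter_subset_inter_right s hball) ⟨y, hy⟩
      _ = infDist x s := infDist_inter_closedBall_of_mem hys
  · exact hball hy.2

theorem infDist_le_dist_add_of_subset_closedBall (hs : s.Nonempty) (hsub : s ⊆ closedBall h ρ) :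
    infDist x s ≤ dist x h + ρ := by
  obtain ⟨y, hy⟩ := hs
  calc infDist x s ≤ dist x y := infDist_le_dist_of_mem hy
    _ ≤ dist x h + dist h y := dist_triangle x h y
    _ ≤ dist x h + ρ := by
      rw [dist_comm h y]
      exact add_le_add_right (mem_closedBall.1 (hsub hy)) _

end Metric

theorem infDist_inter_ball_le_general
    {X : Type*} [MetricSpace X] (C : Set X) (h : X) (r α : ℝ)
    (hα : 0 < α)
    (hne : (C ∩ Metric.closedBall h ((1 + α) * r)).Nonempty) :
    ∀ x : X, dist x h ≤ r →
      Metric.infDist x (C ∩ Metric.closedBall h ((1 + α) * r)) ≤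
        (1 + 2 / α) * Metric.infDist x C := by
  intro x hx
  rcases lt_or_ge (infDist x C) (α * r) with hlt | hge
  · rw [infDist_inter_closedBall_eq_of_infDist_add_dist_lt (by linarith)]
    exact le_mul_of_one_le_left infDist_nonneg (le_add_of_nonneg_right (by positivity))
  · calc infDist x (C ∩ closedBall h ((1 + α) * r))
        ≤ dist x h + (1 + α) * r :=
          infDist_le_dist_add_of_subset_closedBall hne Set.inter_subset_right
      _ ≤ (1 + 2 / α) * (α * r) := by field_simp; linarith
      _ ≤ (1 + 2 / α) * infDist x C := by gcongr

/-- If `C' = C ∩ closedBall h ((1+α)·r)` is nonempty, then for every `x` with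
`d(x, h) ≤ r`, the infimum distance from `x` to `C'` is at most `(1 + 2/α)` times the
infimum distance from `x` to `C`. -/
theorem infDist_inter_ball_le
    {X : Type*} [MetricSpace X] (C : Set X) (h : X) (r α : ℝ)
    (hr : 0 < r) (hα : 0 < α)
    (hne : (C ∩ Metric.closedBall h ((1 + α) * r)).Nonempty) :
    ∀ x : X, dist x h ≤ r →
      Metric.infDist x (C ∩ Metric.closedBall h ((1 + α) * r)) ≤
        (1 + 2 / α) * Metric.infDist x C :=
  infDist_inter_ball_le_general C h r α hα hne
end

section
/- Let a, b > 0. Let X and Y be independent real random variables such that X has the Gamma distribution with shape a/2 and rate 1/2 (i.e., X is chi-squared with a degrees of freedom) and Y has the Gamma distribution with shape b/2 and rate 1/2. Then X/(X+Y) has the Beta(a/2, b/2) distribution, i.e., its law has density t ↦ t^{a/2 − 1}·(1 − t)^{b/2 − 1} / B(a/2, b/2) on (0,1) with respect to Lebesgue measure, where B(p, q) = Γ(p)·Γ(q)/Γ(p+q). -/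
open MeasureTheory ProbabilityTheory

/-- The Beta distribution `Beta(p, q)` on `ℝ`, given by the density
`t ↦ t^(p−1)·(1−t)^(q−1) / B(p,q)` on `(0,1)` with respect to Lebesgue measure,
where `B(p,q) = Γ(p)·Γ(q)/Γ(p+q)`. -/
noncomputable def betaMeasure (p q : ℝ) : Measure ℝ :=
  volume.withDensity fun t =>
    ENNReal.ofReal (Set.indicator (Set.Ioo (0 : ℝ) 1)
      (fun t => t ^ (p - 1) * (1 - t) ^ (q - 1) /
        (Real.Gamma p * Real.Gamma q / Real.Gamma (p + q))) t)

/-! The substitution `(x, y) = (t v, (1 - t) v)` has Jacobian `v` and maps `(0, 1) × (0, ∞)`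
bijectively onto the open quadrant. It turns the product of the `Gamma(p, r)` and `Gamma(q, r)`
densities into the `Beta(p, q)` density in `t` times the `Gamma(p + q, r)` density in `v`, so
`(X / (X + Y), X + Y)` has law `Beta(p, q) ⊗ Gamma(p + q, r)`, and `X / (X + Y)` is its first
marginal. -/

open Real Set
open scoped ENNReal

section WithDensity

variable {α β : Type*} [MeasurableSpace α] [MeasurableSpace β] {μ : Measure α}

lemma map_withDensity_comp {f : α → β} {g : β → ℝ≥0∞} (hf : Measurable f) (hg : Measurable g) :
    (μ.withDensity (g ∘ f)).map f = (μ.map f).withDensity g := by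
  ext s hs
  rw [Measure.map_apply hf hs, withDensity_apply _ (hf hs), withDensity_apply _ hs,
    setLIntegral_map hs hg hf, Function.comp_def]

lemma prod_withDensity_restrict {ν : Measure β} [SFinite μ] [SFinite ν] {f : α → ℝ≥0∞}
    {g : β → ℝ≥0∞} (hf : Measurable f) (hg : Measurable g) (s : Set α) (t : Set β) :
    ((μ.restrict s).withDensity f).prod ((ν.restrict t).withDensity g) =
      ((μ.prod ν).restrict (s ×ˢ t)).withDensity fun z => f z.1 * g z.2 := by
  rw [prod_withDensity hf hg, Measure.prod_restrict]

end WithDensity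

lemma gammaMeasure_eq_withDensity_restrict_Ioi (a r : ℝ) :
    gammaMeasure a r = (volume.restrict (Ioi (0 : ℝ))).withDensity (gammaPDF a r) := by
  have hIci : (Ici 0).indicator (gammaPDF a r) = gammaPDF a r :=
    indicator_eq_self.2 fun x hx => not_lt.1 fun hx0 => hx (gammaPDF_of_neg hx0)
  rw [← withDensity_indicator measurableSet_Ioi, gammaMeasure]
  -- equality holds only off the null set `{0}`: e.g. `gammaPDF 1 r 0 = r`
  refine withDensity_congr_ae ?_
  have h := indicator_ae_eq_of_ae_eq_set (f := gammaPDF a r)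
    (Ioi_ae_eq_Ici (μ := volume) (a := 0))
  rw [hIci] at h
  exact h.symm

lemma betaMeasure_eq_withDensity_restrict_Ioo (p q : ℝ) :
    _root_.betaMeasure p q = (volume.restrict (Ioo (0 : ℝ) 1)).withDensity (betaPDF p q) := by
  rw [← withDensity_indicator measurableSet_Ioo, _root_.betaMeasure]
  congr 1
  ext t
  by_cases ht : t ∈ Ioo (0 : ℝ) 1
  · simp [ht, betaPDF_of_pos_lt_one ht.1 ht.2, ProbabilityTheory.beta, div_eq_inv_mul,
      mul_assoc]
  · simp [ht]

namespace BetaGamma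

def splitSum (w : ℝ × ℝ) : ℝ × ℝ := (w.1 * w.2, (1 - w.1) * w.2)

noncomputable def ratioSum (z : ℝ × ℝ) : ℝ × ℝ := (z.1 / (z.1 + z.2), z.1 + z.2)

noncomputable def fderivSplitSum (w : ℝ × ℝ) : ℝ × ℝ →L[ℝ] ℝ × ℝ :=
  (Matrix.toLin (.finTwoProd ℝ) (.finTwoProd ℝ)
    !![w.2, w.1; -w.2, 1 - w.1]).toContinuousLinearMap

theorem hasFDerivAt_splitSum (w : ℝ × ℝ) : HasFDerivAt splitSum (fderivSplitSum w) w := by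
  unfold fderivSplitSum
  rw [Matrix.toLin_finTwoProd_toContinuousLinearMap]
  have hfst : HasFDerivAt (fun w : ℝ × ℝ => w.1 * w.2)
      (w.1 • ContinuousLinearMap.snd ℝ ℝ ℝ + w.2 • ContinuousLinearMap.fst ℝ ℝ ℝ) w :=
    hasFDerivAt_fst.mul hasFDerivAt_snd
  have hsnd : HasFDerivAt (fun w : ℝ × ℝ => (1 - w.1) * w.2)
      ((1 - w.1) • ContinuousLinearMap.snd ℝ ℝ ℝ +
        w.2 • (0 - ContinuousLinearMap.fst ℝ ℝ ℝ)) w :=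
    ((hasFDerivAt_const 1 w).sub hasFDerivAt_fst).mul hasFDerivAt_snd
  refine (hfst.prodMk hsnd).congr_fderiv ?_
  ext <;> simp

theorem det_fderivSplitSum (w : ℝ × ℝ) : (fderivSplitSum w).det = w.2 := by
  simp only [fderivSplitSum, LinearMap.det_toContinuousLinearMap, LinearMap.det_toLin,
    Matrix.det_fin_two_of]
  ring

@[fun_prop]
theorem measurable_splitSum : Measurable splitSum := by unfold splitSum; fun_prop

@[fun_prop]
theorem measurable_ratioSum : Measurable ratioSum := by unfold ratioSum; fun_prop

theorem leftInvOn_ratioSum : LeftInvOn ratioSum splitSum (Ioo 0 1 ×ˢ Ioi 0) := by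
  rintro ⟨t, v⟩ ⟨-, hv : 0 < v⟩
  simp only [splitSum, ratioSum, Prod.mk.injEq]
  constructor
  · field_simp; ring
  · ring

theorem rightInvOn_ratioSum : RightInvOn ratioSum splitSum (Ioi 0 ×ˢ Ioi 0) := by
  rintro ⟨x, y⟩ ⟨hx : 0 < x, hy : 0 < y⟩
  simp only [splitSum, ratioSum, Prod.mk.injEq]
  constructor
  · field_simp
  · field_simp; ring

theorem bijOn_splitSum : BijOn splitSum (Ioo 0 1 ×ˢ Ioi 0) (Ioi 0 ×ˢ Ioi 0) := by
  refine InvOn.bijOn ⟨leftInvOn_ratioSum, rightInvOn_ratioSum⟩ ?_ ?_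
  · rintro ⟨t, v⟩ ⟨⟨ht0, ht1⟩, hv : 0 < v⟩
    exact ⟨mul_pos ht0 hv, mul_pos (sub_pos.2 ht1) hv⟩
  · rintro ⟨x, y⟩ ⟨hx : 0 < x, hy : 0 < y⟩
    exact ⟨⟨div_pos hx (add_pos hx hy), (div_lt_one (add_pos hx hy)).2 (by linarith)⟩,
      add_pos hx hy⟩

theorem map_splitSum_withDensity :
    ((volume.restrict (Ioo 0 1 ×ˢ Ioi 0)).withDensity fun w => ENNReal.ofReal w.2).map splitSum =
      volume.restrict (Ioi (0 : ℝ) ×ˢ Ioi (0 : ℝ)) := by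
  have hT : MeasurableSet (Ioo (0 : ℝ) 1 ×ˢ Ioi (0 : ℝ)) := by measurability
  rw [← bijOn_splitSum.image_eq, ← map_withDensity_abs_det_fderiv_eq_addHaar volume
    hT.nullMeasurableSet (fun w _ => (hasFDerivAt_splitSum w).hasFDerivWithinAt)
    bijOn_splitSum.injOn]
  refine congrArg _ (withDensity_congr_ae (ae_restrict_of_forall_mem hT ?_))
  rintro w ⟨-, hw : 0 < w.2⟩
  simp only [det_fderivSplitSum, abs_of_pos hw]

theorem mul_gammaPDFReal_mul_gammaPDFReal {p q r t v : ℝ} (hpq : 0 < p + q) (hr : 0 < r)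
    (ht : t ∈ Ioo 0 1) (hv : 0 < v) :
    v * (gammaPDFReal p r (t * v) * gammaPDFReal q r ((1 - t) * v)) =
      betaPDFReal p q t * gammaPDFReal (p + q) r v := by
  obtain ⟨ht0, ht1⟩ := ht
  have hΓ := (Gamma_pos_of_pos hpq).ne'
  rw [gammaPDFReal, if_pos (by positivity), gammaPDFReal, if_pos (by nlinarith), gammaPDFReal,
    if_pos hv.le, betaPDFReal, if_pos ⟨ht0, ht1⟩, ProbabilityTheory.beta,
    mul_rpow ht0.le hv.le, mul_rpow (by linarith) hv.le, rpow_add hr,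
    show v ^ (p + q - 1) = v ^ (p - 1) * v ^ (q - 1) * v by
      rw [← rpow_add hv, ← rpow_add_one hv.ne']; ring_nf,
    show exp (-(r * v)) = exp (-(r * (t * v))) * exp (-(r * ((1 - t) * v))) by
      rw [← exp_add]; ring_nf]
  field_simp

theorem ofReal_mul_gammaPDF_mul_gammaPDF {p q r t v : ℝ} (hp : 0 < p) (hq : 0 < q) (hr : 0 < r)
    (ht : t ∈ Ioo 0 1) (hv : 0 < v) :
    ENNReal.ofReal v * (gammaPDF p r (t * v) * gammaPDF q r ((1 - t) * v)) =
      betaPDF p q t * gammaPDF (p + q) r v := by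
  rw [gammaPDF, gammaPDF, gammaPDF, betaPDF, ← ENNReal.ofReal_mul (gammaPDFReal_nonneg hp hr _),
    ← ENNReal.ofReal_mul hv.le, mul_gammaPDFReal_mul_gammaPDFReal (add_pos hp hq) hr ht hv,
    ENNReal.ofReal_mul (betaPDFReal_pos ht.1 ht.2 hp hq).le]

theorem map_ratioSum_gammaMeasure_prod {p q r : ℝ} (hp : 0 < p) (hq : 0 < q) (hr : 0 < r) :
    ((gammaMeasure p r).prod (gammaMeasure q r)).map ratioSum =
      (_root_.betaMeasure p q).prod (gammaMeasure (p + q) r) := by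
  have hT : MeasurableSet (Ioo (0 : ℝ) 1 ×ˢ Ioi (0 : ℝ)) := by measurability
  have hgamma (a : ℝ) : Measurable (gammaPDF a r) := (measurable_gammaPDFReal a r).ennreal_ofReal
  have hbeta : Measurable (betaPDF p q) := (measurable_betaPDFReal p q).ennreal_ofReal
  have hprod : (gammaMeasure p r).prod (gammaMeasure q r) =
      (volume.restrict (Ioi 0 ×ˢ Ioi 0)).withDensity
        fun z => gammaPDF p r z.1 * gammaPDF q r z.2 := by
    simp only [gammaMeasure_eq_withDensity_restrict_Ioi]
    exact prod_withDensity_restrict (hgamma p) (hgamma q) _ _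
  have hjoint : (_root_.betaMeasure p q).prod (gammaMeasure (p + q) r) =
      (volume.restrict (Ioo 0 1 ×ˢ Ioi 0)).withDensity
        fun w => betaPDF p q w.1 * gammaPDF (p + q) r w.2 := by
    rw [betaMeasure_eq_withDensity_restrict_Ioo, gammaMeasure_eq_withDensity_restrict_Ioi]
    exact prod_withDensity_restrict hbeta (hgamma _) _ _
  have hsplit : ((_root_.betaMeasure p q).prod (gammaMeasure (p + q) r)).map splitSum =
      (gammaMeasure p r).prod (gammaMeasure q r) := by
    rw [hprod, hjoint, ← map_splitSum_withDensity,
      ← map_withDensity_comp measurable_splitSum (by fun_prop),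
      ← withDensity_mul _ (by fun_prop) (by fun_prop)]
    refine congrArg _ (withDensity_congr_ae (ae_restrict_of_forall_mem hT ?_))
    rintro ⟨t, v⟩ ⟨ht, hv⟩
    exact (ofReal_mul_gammaPDF_mul_gammaPDF hp hq hr ht hv).symm
  rw [← hsplit, Measure.map_map measurable_ratioSum measurable_splitSum, hjoint]
  have hinv : ratioSum ∘ splitSum =ᵐ[volume.restrict (Ioo 0 1 ×ˢ Ioi 0)] id :=
    ae_restrict_of_forall_mem hT leftInvOn_ratioSum
  rw [Measure.map_congr ((withDensity_absolutelyContinuous _ _).ae_le hinv), Measure.map_id]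

theorem map_div_add_gammaMeasure_prod {p q r : ℝ} (hp : 0 < p) (hq : 0 < q) (hr : 0 < r) :
    ((gammaMeasure p r).prod (gammaMeasure q r)).map (fun z => z.1 / (z.1 + z.2)) =
      _root_.betaMeasure p q := by
  have := isProbabilityMeasure_gammaMeasure (add_pos hp hq) hr
  rw [show (fun z : ℝ × ℝ => z.1 / (z.1 + z.2)) = Prod.fst ∘ ratioSum from rfl,
    ← Measure.map_map measurable_fst measurable_ratioSum, map_ratioSum_gammaMeasure_prod hp hq hr,
    Measure.map_fst_prod, measure_univ, one_smul]

end BetaGamma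

/-- If `X ~ χ²(a) = Gamma(a/2, rate 1/2)` and `Y ~ χ²(b) = Gamma(b/2, rate 1/2)` are
independent, then `X/(X+Y)` has the `Beta(a/2, b/2)` distribution. -/
theorem gamma_ratio_beta
    {Ω : Type*} [MeasureSpace Ω] [IsProbabilityMeasure (ℙ : Measure Ω)]
    (a b : ℝ) (ha : 0 < a) (hb : 0 < b)
    (X Y : Ω → ℝ)
    (hXY : IndepFun X Y ℙ)
    (hX : Measure.map X ℙ = gammaMeasure (a / 2) (1 / 2))
    (hY : Measure.map Y ℙ = gammaMeasure (b / 2) (1 / 2)) :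
    Measure.map (fun ω => X ω / (X ω + Y ω)) ℙ = _root_.betaMeasure (a / 2) (b / 2) := by
  have hr : (0 : ℝ) < 1 / 2 := by norm_num
  have hXm : AEMeasurable X ℙ := .of_map_ne_zero <| by
    rw [hX]; exact (isProbabilityMeasure_gammaMeasure (half_pos ha) hr).ne_zero
  have hYm : AEMeasurable Y ℙ := .of_map_ne_zero <| by
    rw [hY]; exact (isProbabilityMeasure_gammaMeasure (half_pos hb) hr).ne_zero
  have hlaw : Measure.map (fun ω => (X ω, Y ω)) ℙ =
      (gammaMeasure (a / 2) (1 / 2)).prod (gammaMeasure (b / 2) (1 / 2)) := by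
    rw [(indepFun_iff_map_prod_eq_prod_map_map hXm hYm).1 hXY, hX, hY]
  rw [← BetaGamma.map_div_add_gammaMeasure_prod (half_pos ha) (half_pos hb) hr, ← hlaw,
    AEMeasurable.map_map_of_aemeasurable (by fun_prop) (hXm.prodMk hYm)]
  rfl
end

section
/- For every real ε with 0 ≤ ε ≤ 1, (1/2)·ln(1+ε) − (1+ε)/2 + 1/2 ≤ ((ln 2 − 1)/2)·ε². -/
/-!
With `a = 1 - log 2`, the function `ψ(x) = log (1 + x) - x + a x²` vanishes at `0` and at `1`,
and the inequality says `ψ ≤ 0` on `[0, 1]`. Since `ψ'(x) = x (2a(1 + x) - 1) / (1 + x)`,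
`ψ` decreases up to `x = 1/(2a) - 1` and increases afterwards, so on `[0, 1]` it is bounded by
`max (ψ 0) (ψ 1) = 0`. The turning point is nonnegative because `1/2 ≤ log 2 < 1`.
-/

open Real Set

theorem le_max_of_antitoneOn_of_monotoneOn {f : ℝ → ℝ} {a b s x : ℝ}
    (hanti : AntitoneOn f (Icc a s)) (hmono : MonotoneOn f (Icc s b)) (hx : x ∈ Icc a b) :
    f x ≤ max (f a) (f b) := by
  rcases le_total x s with hxs | hsx
  · exact le_max_of_le_left <| hanti ⟨le_rfl, hx.1.trans hxs⟩ ⟨hx.1, hxs⟩ hx.1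
  · exact le_max_of_le_right <| hmono ⟨hsx, hx.2⟩ ⟨hsx.trans hx.2, le_rfl⟩ hx.2

noncomputable def logOneAddSubQuad (a x : ℝ) : ℝ := log (1 + x) - x + a * x ^ 2

namespace logOneAddSubQuad

variable {a : ℝ}

theorem hasDerivAt {x : ℝ} (hx : 0 < 1 + x) :
    HasDerivAt (logOneAddSubQuad a) (x * (2 * a * (1 + x) - 1) / (1 + x)) x := by
  have hlog : HasDerivAt (fun x => log (1 + x)) (1 / (1 + x)) x := by
    simpa using ((hasDerivAt_id x).const_add 1).log hx.ne'
  refine ((hlog.sub (hasDerivAt_id' x)).add ((hasDerivAt_pow 2 x).const_mul a)).congr_deriv ?_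
  field_simp
  ring

theorem continuousOn_Ici {s : ℝ} (hs : -1 < s) : ContinuousOn (logOneAddSubQuad a) (Ici s) :=
  fun x hx => (hasDerivAt (by linarith [mem_Ici.mp hx])).continuousAt.continuousWithinAt

theorem antitoneOn (ha : 0 < a) : AntitoneOn (logOneAddSubQuad a) (Icc 0 (1 / (2 * a) - 1)) := by
  refine antitoneOn_of_hasDerivWithinAt_nonpos (convex_Icc _ _)
    (f' := fun x => x * (2 * a * (1 + x) - 1) / (1 + x))
    ((continuousOn_Ici (by norm_num)).mono Icc_subset_Ici_self) (fun x hx => ?_) (fun x hx => ?_)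
  all_goals
    rw [interior_Icc] at hx
    obtain ⟨hx0, hxs⟩ := hx
  · exact (hasDerivAt (by linarith)).hasDerivWithinAt
  · have hturn : 2 * a * (1 + x) < 1 := by
      rw [lt_sub_iff_add_lt, lt_div_iff₀ (by positivity)] at hxs
      linarith
    exact div_nonpos_of_nonpos_of_nonneg
      (mul_nonpos_of_nonneg_of_nonpos hx0.le (by linarith)) (by linarith)

theorem monotoneOn (ha : 0 < a) (ha' : a ≤ 1 / 2) :
    MonotoneOn (logOneAddSubQuad a) (Ici (1 / (2 * a) - 1)) := by
  have hs : 0 ≤ 1 / (2 * a) - 1 := by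
    rw [sub_nonneg, le_div_iff₀ (by positivity)]
    linarith
  refine monotoneOn_of_hasDerivWithinAt_nonneg (convex_Ici _)
    (f' := fun x => x * (2 * a * (1 + x) - 1) / (1 + x)) (continuousOn_Ici (by linarith))
    (fun x hx => ?_) (fun x hx => ?_)
  all_goals
    rw [interior_Ici, mem_Ioi] at hx
    have hx0 : 0 < x := hs.trans_lt hx
  · exact (hasDerivAt (by linarith)).hasDerivWithinAt
  · have hturn : 1 < 2 * a * (1 + x) := by
      rw [sub_lt_iff_lt_add, div_lt_iff₀ (by positivity)] at hx
      linarith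
    exact div_nonneg (mul_nonneg hx0.le (by linarith)) (by linarith)

end logOneAddSubQuad

/-- For every real `ε` with `0 ≤ ε ≤ 1`,
`(1/2)·ln(1+ε) − (1+ε)/2 + 1/2 ≤ ((ln 2 − 1)/2)·ε²`. -/
theorem log_ineq_eps :
    ∀ ε : ℝ, 0 ≤ ε → ε ≤ 1 →
      (1 / 2) * Real.log (1 + ε) - (1 + ε) / 2 + 1 / 2 ≤
        ((Real.log 2 - 1) / 2) * ε ^ 2 := by
  intro ε h0 h1
  have ha : 0 < 1 - log 2 := by linarith [log_two_lt_d9]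
  have ha' : 1 - log 2 ≤ 1 / 2 := by linarith [log_two_gt_d9]
  have h := le_max_of_antitoneOn_of_monotoneOn (logOneAddSubQuad.antitoneOn ha)
    ((logOneAddSubQuad.monotoneOn ha ha').mono Icc_subset_Ici_self) ⟨h0, h1⟩
  have hends : max (logOneAddSubQuad (1 - log 2) 0) (logOneAddSubQuad (1 - log 2) 1) = 0 := by
    norm_num [logOneAddSubQuad, one_add_one_eq_two]
  rw [hends, logOneAddSubQuad] at h
  linear_combination (1 / 2) * h
end
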